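/- arXiv:1407.8235 — 7 statements merged into one kernel-verified Lean document; each statement's English description precedes it below -/
import Mathlib

section
/- Let i ≤ j with j ≥ 2i. The map sending the H_{i,j}-orbit of an injection f : [i] → [j] to the triple (f⁻¹[i], f|_{f⁻¹[i]}) is a bijection from the set of H_{i,j}-orbits of injections [i] → [j] onto the set of pairs (U, a) where U ⊆ [i] and a : U → [i] is an injection. -/
/-- Injections `[i] → [j]`. -/
def Inj (i j : ℕ) := {f : Fin i → Fin j // Function.Injective f}

/-- Pairs `(U, a)` where `U ⊆ [i]` and `a : U → [i]` is an injection. -/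
def Pairs (i : ℕ) := Σ U : Finset (Fin i), {a : {x : Fin i // x ∈ U} → Fin i // Function.Injective a}

/-- The map sending an injection `f : [i] → [j]` to the pair
`(f⁻¹[i], f|_{f⁻¹[i]})`. -/
def toPair (i j : ℕ) (f : Inj i j) : Pairs i :=
  ⟨Finset.univ.filter (fun r : Fin i => (f.1 r : ℕ) < i),
   ⟨fun r => ⟨(f.1 r.1 : ℕ), (Finset.mem_filter.mp r.2).2⟩,
    by
      intro a b h
      have h' : (f.1 a.1 : ℕ) = (f.1 b.1 : ℕ) := by simpa using h
      exact Subtype.ext (f.2 (Fin.ext h'))⟩⟩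

/-!
An `H_{i,j}`-orbit of `f` is pinned down by where `f` lands inside `[i]` (which `H_{i,j}` fixes
pointwise): a permutation fixing `[i]` can move the remaining values of `f` anywhere outside `[i]`,
since a permutation of `[j]` can extend any partial injection. Conversely, a pair `(U, a)` is
realised by sending `U` along `a` and each `r ∉ U` to `i + r ∈ [2i] \ [i]`.
-/

theorem Pairs.ext_iff {i : ℕ} {p q : Pairs i} :
    p = q ↔ p.1 = q.1 ∧ ∀ x (hxp : x ∈ p.1) (hxq : x ∈ q.1), p.2.1 ⟨x, hxp⟩ = q.2.1 ⟨x, hxq⟩ := by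
  obtain ⟨U, a⟩ := p
  obtain ⟨V, b⟩ := q
  constructor
  · rintro ⟨⟩
    exact ⟨rfl, fun _ _ _ => rfl⟩
  · rintro ⟨rfl, hab⟩
    exact congrArg _ (Subtype.ext (funext fun x => hab x.1 x.2 x.2))

section

variable {i j : ℕ}

@[simp]
theorem mem_toPair_fst (f : Inj i j) (r : Fin i) : r ∈ (toPair i j f).1 ↔ (f.1 r : ℕ) < i := by
  simp [toPair]

@[simp]
theorem val_toPair_snd_apply (f : Inj i j) (x : {x // x ∈ (toPair i j f).1}) :
    ((toPair i j f).2.1 x : ℕ) = f.1 x := rfl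

theorem toPair_eq_toPair_iff (f g : Inj i j) :
    toPair i j f = toPair i j g ↔ ∀ r, ((f.1 r : ℕ) < i ∨ (g.1 r : ℕ) < i) → f.1 r = g.1 r := by
  simp only [Pairs.ext_iff, Finset.ext_iff, mem_toPair_fst, Fin.ext_iff, val_toPair_snd_apply]
  constructor
  · rintro ⟨hlow, hval⟩ r (hr | hr)
    · exact hval r hr ((hlow r).1 hr)
    · exact hval r ((hlow r).2 hr) hr
  · intro h
    exact ⟨fun r => ⟨fun hr => h r (.inl hr) ▸ hr, fun hr => h r (.inr hr) ▸ hr⟩,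
      fun r hr _ => h r (.inl hr)⟩

theorem exists_perm_fixing_of_toPair_eq (hij : i ≤ j) {f g : Inj i j}
    (hfg : toPair i j f = toPair i j g) :
    ∃ σ : Equiv.Perm (Fin j),
      (∀ r : Fin i, σ (Fin.castLE hij r) = Fin.castLE hij r) ∧ σ ∘ f.1 = g.1 := by
  rw [toPair_eq_toPair_iff] at hfg
  have hg_high : ∀ r, i ≤ (f.1 r : ℕ) → i ≤ (g.1 r : ℕ) := fun r hr => by
    by_contra! hg
    have := hfg r (.inr hg)
    omega
  let F : Fin i ⊕ {r // i ≤ (f.1 r : ℕ)} → Fin j := Sum.elim (Fin.castLE hij) (f.1 ·)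
  let G : Fin i ⊕ {r // i ≤ (f.1 r : ℕ)} → Fin j := Sum.elim (Fin.castLE hij) (g.1 ·)
  have hF : F.Injective := (Fin.castLE_injective hij).sumElim (f.2.comp Subtype.val_injective)
    fun x r h => by
      have := r.2
      rw [Fin.ext_iff, Fin.val_castLE] at h
      omega
  have hG : G.Injective := (Fin.castLE_injective hij).sumElim (g.2.comp Subtype.val_injective)
    fun x r h => by
      have := hg_high r r.2
      rw [Fin.ext_iff, Fin.val_castLE] at h
      omega
  obtain ⟨σ, hσ⟩ := Equiv.Perm.exists_extending_pair F G hF hG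
  refine ⟨σ, fun r => hσ (.inl r), funext fun r => ?_⟩
  by_cases hr : i ≤ (f.1 r : ℕ)
  · exact hσ (.inr ⟨r, hr⟩)
  · exact (hσ (.inl ⟨f.1 r, by omega⟩)).trans (hfg r (.inl (by omega)))

theorem toPair_eq_of_perm_fixing (hij : i ≤ j) {f g : Inj i j} (σ : Equiv.Perm (Fin j))
    (hσ : ∀ r : Fin i, σ (Fin.castLE hij r) = Fin.castLE hij r) (hσfg : σ ∘ f.1 = g.1) :
    toPair i j f = toPair i j g := by
  rw [toPair_eq_toPair_iff]
  have hσ' : ∀ x : Fin j, (x : ℕ) < i → σ x = x := fun x hx => hσ ⟨x, hx⟩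
  rintro r (hr | hr)
  · rw [← hσfg, Function.comp_apply, hσ' _ hr]
  · apply σ.injective
    rw [← Function.comp_apply (f := σ), hσfg, hσ' _ hr]

def Pairs.toInj (h2i : 2 * i ≤ j) (p : Pairs i) : Inj i j :=
  ⟨fun r => if hr : r ∈ p.1 then Fin.castLE (by omega) (p.2.1 ⟨r, hr⟩) else ⟨i + r, by omega⟩,
    fun r s hrs => by
      have hrs := congrArg Fin.val hrs
      dsimp only at hrs
      split_ifs at hrs with hr hs hs
      · simpa using p.2.2 (Fin.ext hrs)
      · have := (p.2.1 ⟨r, hr⟩).2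
        simp only [Fin.val_castLE] at hrs
        omega
      · have := (p.2.1 ⟨s, hs⟩).2
        simp only [Fin.val_castLE] at hrs
        omega
      · simpa [Fin.ext_iff] using hrs⟩

theorem Pairs.toInj_apply_of_mem (h2i : 2 * i ≤ j) (p : Pairs i) {r : Fin i} (hr : r ∈ p.1) :
    ((p.toInj h2i).1 r : ℕ) = p.2.1 ⟨r, hr⟩ := by
  simp [Pairs.toInj, hr]

theorem Pairs.toInj_apply_of_notMem (h2i : 2 * i ≤ j) (p : Pairs i) {r : Fin i} (hr : r ∉ p.1) :
    ((p.toInj h2i).1 r : ℕ) = i + r := by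
  simp [Pairs.toInj, hr]

theorem toPair_toInj (h2i : 2 * i ≤ j) (p : Pairs i) : toPair i j (p.toInj h2i) = p := by
  refine Pairs.ext_iff.2 ⟨Finset.ext fun r => ?_, fun r hr hr' => Fin.ext ?_⟩
  · by_cases hr : r ∈ p.1
    · simp [hr, p.toInj_apply_of_mem h2i hr]
    · simp [hr, p.toInj_apply_of_notMem h2i hr]
  · rw [val_toPair_snd_apply, p.toInj_apply_of_mem h2i hr']

end

/-- for `j ≥ 2i`, the map `f ↦ (f⁻¹[i], f|_{f⁻¹[i]})` induces a
bijection from the set of `H_{i,j}`-orbits of injections `[i] → [j]` onto the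
set of pairs `(U, a)` with `U ⊆ [i]` and `a : U → [i]` injective. -/
theorem stmt_4 (i j : ℕ) (hij : i ≤ j) (h2i : 2 * i ≤ j) :
    (∀ f g : Inj i j,
      toPair i j f = toPair i j g ↔
        ∃ σ : Equiv.Perm (Fin j),
          (∀ r : Fin i, σ (Fin.castLE hij r) = Fin.castLE hij r) ∧ σ ∘ f.1 = g.1) ∧
    Function.Surjective (toPair i j) :=
  ⟨fun _ _ => ⟨exists_perm_fixing_of_toPair_eq hij,
      fun ⟨σ, hσ, hσfg⟩ => toPair_eq_of_perm_fixing hij σ hσ hσfg⟩,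
    fun p => ⟨p.toInj h2i, toPair_toInj h2i p⟩⟩
end

section
/- Let q be a prime power, i ≤ j, and let α : F_q^i → F_q^j be the standard inclusion. Let H_{i,j} = Stab_{GL_j(F_q)}(α) be the subgroup of matrices of the form [[I_i, X],[0, Y]] with Y invertible. When j ≥ 2i, the set of H_{i,j}-orbits on injective linear maps F_q^i → F_q^j is in bijection with the set of pairs (U, f) where U is a subspace of F_q^i and f : F_q^i → F_q^i/U is a surjective linear map. -/
/-- The standard inclusion `F^i → F^j` (extension by zero). -/
def stdInc (F : Type) [Field F] (i j : ℕ) : (Fin i → F) →ₗ[F] (Fin j → F) where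
  toFun v x := if h : (x : ℕ) < i then v ⟨x, h⟩ else 0
  map_add' u v := by funext x; by_cases h : (x : ℕ) < i <;> simp [h]
  map_smul' c v := by funext x; by_cases h : (x : ℕ) < i <;> simp [h]

/-- The `r`-th row of (the matrix of) a linear map `A : F^i → F^j`. -/
def rowOf {F : Type} [Field F] {i j : ℕ} (A : (Fin i → F) →ₗ[F] (Fin j → F))
    (r : Fin j) : Fin i → F :=
  fun s => A (Pi.single s 1) r

/-- `U_A`: the span of the last `j - i` rows of `A`. -/
def UofA {F : Type} [Field F] {i j : ℕ} (A : (Fin i → F) →ₗ[F] (Fin j → F)) :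
    Submodule F (Fin i → F) :=
  Submodule.span F (rowOf A '' {r : Fin j | i ≤ (r : ℕ)})

/-- `f_A : F^i → F^i / U_A`, sending the `r`-th standard basis vector to the
`r`-th row of `A` modulo `U_A`. -/
noncomputable def fofA {F : Type} [Field F] {i j : ℕ} (hij : i ≤ j)
    (A : (Fin i → F) →ₗ[F] (Fin j → F)) :
    (Fin i → F) →ₗ[F] ((Fin i → F) ⧸ UofA A) :=
  (Pi.basisFun F (Fin i)).constr F (fun r => (UofA A).mkQ (rowOf A (Fin.castLE hij r)))

/-- The invariant `A ↦ (U_A, f_A)`. -/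
noncomputable def invOf {F : Type} [Field F] {i j : ℕ} (hij : i ≤ j)
    (A : (Fin i → F) →ₗ[F] (Fin j → F)) :
    Σ U : Submodule F (Fin i → F), (Fin i → F) →ₗ[F] ((Fin i → F) ⧸ U) :=
  ⟨UofA A, fofA hij A⟩

/-!
Write `A` in block form, `A₁` over `A₂`, with `A₁` its first `i` rows. The stabiliser of the
standard inclusion consists of the block matrices `[[1, X], [0, Y]]`, which send `(A₁, A₂)` to
`(A₁ + X A₂, Y A₂)`. Over a field, `B₂ = Y A₂` for an invertible `Y` exactly when `A₂` and `B₂`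
have the same row space (this is `U_A = U_B`), and `B₁ - A₁ = X A₂` for some `X` exactly when the
rows of `B₁ - A₁` lie in `U_A` (this is `f_A = f_B`). The rows of `A` span `F^i` iff `A` is
injective, and modulo `U_A` they reduce to the rows of `A₁`; hence `A` is injective iff `f_A` is
surjective. Finally, a pair `(U, f)` is realised by taking lifts of the `f(e_r)` as the rows of
`A₁` and a spanning family of `U` as the rows of `A₂`, which has room for it since
`dim U ≤ i ≤ j - i`.
-/

open Submodule LinearMap

lemma sigma_mk_eq_iff_quotEquivOfEq_comp {K M W : Type*} [Field K] [AddCommGroup M]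
    [Module K M] [AddCommGroup W] [Module K W] {U V : Submodule K W} (f : M →ₗ[K] W ⧸ U)
    (g : M →ₗ[K] W ⧸ V) :
    (⟨U, f⟩ : Σ U' : Submodule K W, M →ₗ[K] W ⧸ U') = ⟨V, g⟩ ↔
      ∃ h : U = V, (quotEquivOfEq U V h).toLinearMap ∘ₗ f = g := by
  constructor
  · rintro ⟨⟩
    refine ⟨rfl, LinearMap.ext fun x => ?_⟩
    obtain ⟨y, hy⟩ := U.mkQ_surjective (f x)
    simp [← hy]
  · rintro ⟨rfl, rfl⟩
    congr
    refine LinearMap.ext fun x => ?_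
    obtain ⟨y, hy⟩ := U.mkQ_surjective (f x)
    simp [← hy]

lemma Submodule.exists_fin_span_range_eq {K V : Type*} [Field K] [AddCommGroup V] [Module K V]
    {U : Submodule K V} [FiniteDimensional K U] {n : ℕ} (hU : Module.finrank K U ≤ n) :
    ∃ w : Fin n → V, span K (Set.range w) = U := by
  let b := Module.finBasis K U
  refine ⟨fun k => if h : (k : ℕ) < Module.finrank K U then b ⟨k, h⟩ else 0, le_antisymm ?_ ?_⟩
  · rw [span_le]
    rintro _ ⟨k, rfl⟩
    dsimp only
    split_ifs <;> simp
  · have hspan : U = span K (Set.range (U.subtype ∘ b)) := by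
      rw [Set.range_comp, span_image, b.span_eq, map_top, range_subtype]
    refine hspan.le.trans (span_mono ?_)
    rintro _ ⟨k, rfl⟩
    exact ⟨Fin.castLE hU k, by simp⟩

lemma LinearMap.exists_linearEquiv_comp_eq_of_ker_eq {K V W : Type*} [Field K]
    [AddCommGroup V] [Module K V] [AddCommGroup W] [Module K W] [FiniteDimensional K W]
    (f g : V →ₗ[K] W) (h : ker f = ker g) : ∃ e : W ≃ₗ[K] W, e.toLinearMap ∘ₗ f = g := by
  -- `range f ≃ V ⧸ ker f ≃ range g`, extended by any isomorphism between complements.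
  let φ : range f ≃ₗ[K] range g :=
    (f.quotKerEquivRange.symm.trans (quotEquivOfEq _ _ h)).trans g.quotKerEquivRange
  obtain ⟨C, hC⟩ := (range f).exists_isCompl
  obtain ⟨D, hD⟩ := (range g).exists_isCompl
  have hCD : Module.finrank K C = Module.finrank K D := by
    have := finrank_add_eq_of_isCompl hC
    have := finrank_add_eq_of_isCompl hD
    have := φ.finrank_eq
    omega
  let e := (prodEquivOfIsCompl _ _ hC).symm.trans
    ((φ.prodCongr (LinearEquiv.ofFinrankEq C D hCD)).trans (prodEquivOfIsCompl _ _ hD))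
  refine ⟨e, LinearMap.ext fun x => ?_⟩
  have hφ : (φ ⟨f x, f.mem_range_self x⟩ : W) = g x := by
    rw [LinearEquiv.trans_apply, LinearEquiv.trans_apply, quotKerEquivRange_symm_apply_image,
      mkQ_apply, quotEquivOfEq_mk, quotKerEquivRange_apply_mk]
  have hsplit : (prodEquivOfIsCompl _ _ hC).symm (f x) =
      ((⟨f x, f.mem_range_self x⟩ : range f), 0) :=
    prodEquivOfIsCompl_symm_apply_left _ _ hC ⟨f x, f.mem_range_self x⟩
  simp [e, hsplit, hφ]

section RowSpace

variable {K : Type} [Field K] {i m p : ℕ}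

def rowSpace (A : (Fin i → K) →ₗ[K] (Fin m → K)) : Submodule K (Fin i → K) :=
  span K (Set.range (rowOf A))

lemma rowOf_mulVecLin (M : Matrix (Fin m) (Fin i) K) : rowOf M.mulVecLin = M := by
  funext r s
  simp [rowOf]

lemma rowOf_comp (X : (Fin m → K) →ₗ[K] (Fin p → K)) (A : (Fin i → K) →ₗ[K] (Fin m → K))
    (r : Fin p) : rowOf (X ∘ₗ A) r = ∑ t, X (Pi.single t 1) r • rowOf A t := by
  have hsingle (t : Fin m) : (fun t' => if t = t' then (1 : K) else 0) = Pi.single t 1 := by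
    funext t'
    simp [Pi.single_apply, eq_comm]
  funext s
  simp [rowOf, X.pi_apply_eq_sum_univ (A (Pi.single s 1)), hsingle, mul_comm]

lemma rowSpace_le_iff (A : (Fin i → K) →ₗ[K] (Fin m → K))
    (B : (Fin i → K) →ₗ[K] (Fin p → K)) :
    rowSpace B ≤ rowSpace A ↔ ∃ X : (Fin m → K) →ₗ[K] (Fin p → K), X ∘ₗ A = B := by
  constructor
  · intro h
    choose c hc using fun r => (mem_span_range_iff_exists_fun K).1 (h (subset_span ⟨r, rfl⟩))
    refine ⟨(Matrix.of c).mulVecLin, LinearMap.pi_ext' fun s => LinearMap.ext_ring ?_⟩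
    funext r
    have hcrs := congrFun (hc r) s
    simp only [Finset.sum_apply, Pi.smul_apply, smul_eq_mul] at hcrs
    simpa [Matrix.mulVec, dotProduct, rowOf] using hcrs
  · rintro ⟨X, rfl⟩
    refine span_le.2 ?_
    rintro _ ⟨r, rfl⟩
    rw [rowOf_comp]
    exact sum_mem fun t _ => smul_mem _ _ (subset_span ⟨t, rfl⟩)

lemma rowSpace_id : rowSpace (LinearMap.id : (Fin i → K) →ₗ[K] (Fin i → K)) = ⊤ := by
  rw [rowSpace, ← (Pi.basisFun K (Fin i)).span_eq]
  congr 2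
  funext r s
  simp [rowOf, Pi.single_apply, eq_comm]

lemma rowSpace_eq_top_iff (A : (Fin i → K) →ₗ[K] (Fin m → K)) :
    rowSpace A = ⊤ ↔ Function.Injective A := by
  rw [← top_le_iff, ← rowSpace_id, rowSpace_le_iff]
  constructor
  · rintro ⟨X, hX⟩
    exact Function.LeftInverse.injective (g := X) fun x => by simpa using LinearMap.congr_fun hX x
  · intro hA
    exact A.exists_leftInverse_of_injective (ker_eq_bot.2 hA)

lemma exists_linearEquiv_comp_eq_of_rowSpace_eq {A B : (Fin i → K) →ₗ[K] (Fin m → K)}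
    (h : rowSpace A = rowSpace B) :
    ∃ Y : (Fin m → K) ≃ₗ[K] (Fin m → K), Y.toLinearMap ∘ₗ A = B := by
  obtain ⟨X, rfl⟩ := (rowSpace_le_iff A B).1 h.ge
  obtain ⟨X', hX'⟩ := (rowSpace_le_iff (X ∘ₗ A) A).1 h.le
  have hker : ker (X ∘ₗ A) ≤ ker A := (ker_le_ker_comp (X ∘ₗ A) X').trans_eq (by rw [hX'])
  exact A.exists_linearEquiv_comp_eq_of_ker_eq (X ∘ₗ A) (le_antisymm (ker_le_ker_comp A X) hker)

end RowSpace

section Blocks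

variable (K : Type) [Field K] (i n : ℕ)

def upperBlock : (Fin (i + n) → K) →ₗ[K] (Fin i → K) := funLeft K K (Fin.castAdd n)

def lowerBlock : (Fin (i + n) → K) →ₗ[K] (Fin n → K) := funLeft K K (Fin.natAdd i)

def blockSplit : (Fin (i + n) → K) ≃ₗ[K] (Fin n → K) × (Fin i → K) :=
  ((LinearEquiv.funCongrLeft K K finSumFinEquiv).trans
    (LinearEquiv.sumArrowLequivProdArrow _ _ K K)).trans (LinearEquiv.prodComm K _ _)

variable {K i n}

@[simp]
lemma blockSplit_apply (x : Fin (i + n) → K) :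
    blockSplit K i n x = (lowerBlock K i n x, upperBlock K i n x) := rfl

@[simp]
lemma lowerBlock_blockSplit_symm (p : (Fin n → K) × (Fin i → K)) :
    lowerBlock K i n ((blockSplit K i n).symm p) = p.1 :=
  congrArg Prod.fst ((blockSplit K i n).apply_symm_apply p)

@[simp]
lemma upperBlock_blockSplit_symm (p : (Fin n → K) × (Fin i → K)) :
    upperBlock K i n ((blockSplit K i n).symm p) = p.2 :=
  congrArg Prod.snd ((blockSplit K i n).apply_symm_apply p)

@[simp]
lemma upperBlock_stdInc (v : Fin i → K) : upperBlock K i n (stdInc K i (i + n) v) = v := by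
  ext r
  simp [upperBlock, stdInc]

@[simp]
lemma lowerBlock_stdInc (v : Fin i → K) : lowerBlock K i n (stdInc K i (i + n) v) = 0 := by
  ext k
  simp [lowerBlock, stdInc]

lemma rowOf_upperBlock_comp (A : (Fin i → K) →ₗ[K] (Fin (i + n) → K)) :
    rowOf (upperBlock K i n ∘ₗ A) = rowOf A ∘ Fin.castAdd n := rfl

lemma rowOf_lowerBlock_comp (A : (Fin i → K) →ₗ[K] (Fin (i + n) → K)) :
    rowOf (lowerBlock K i n ∘ₗ A) = rowOf A ∘ Fin.natAdd i := rfl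

/-- The block matrix `[[1, X], [0, Y]]`; `blockSplit` lists the lower block first so that this is
a `skewProd`. -/
def blockShear (X : (Fin n → K) →ₗ[K] (Fin i → K)) (Y : (Fin n → K) ≃ₗ[K] (Fin n → K)) :
    (Fin (i + n) → K) ≃ₗ[K] (Fin (i + n) → K) :=
  (blockSplit K i n).trans ((Y.skewProd (LinearEquiv.refl K _) X).trans (blockSplit K i n).symm)

lemma blockSplit_blockShear (X : (Fin n → K) →ₗ[K] (Fin i → K))
    (Y : (Fin n → K) ≃ₗ[K] (Fin n → K)) (x : Fin (i + n) → K) :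
    blockSplit K i n (blockShear X Y x) =
      (Y (lowerBlock K i n x), upperBlock K i n x + X (lowerBlock K i n x)) := by
  simp [blockShear, LinearEquiv.skewProd_apply]

lemma blockShear_comp_stdInc (X : (Fin n → K) →ₗ[K] (Fin i → K))
    (Y : (Fin n → K) ≃ₗ[K] (Fin n → K)) :
    (blockShear X Y).toLinearMap ∘ₗ stdInc K i (i + n) = stdInc K i (i + n) := by
  refine LinearMap.ext fun v => (blockSplit K i n).injective ?_
  rw [comp_apply, LinearEquiv.coe_coe, blockSplit_blockShear]
  simp

lemma exists_blocks_of_comp_stdInc (e : (Fin (i + n) → K) ≃ₗ[K] (Fin (i + n) → K))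
    (he : e.toLinearMap ∘ₗ stdInc K i (i + n) = stdInc K i (i + n)) :
    ∃ (X : (Fin n → K) →ₗ[K] (Fin i → K)) (Y : (Fin n → K) →ₗ[K] (Fin n → K)),
      upperBlock K i n ∘ₗ e.toLinearMap = upperBlock K i n + X ∘ₗ lowerBlock K i n ∧
      lowerBlock K i n ∘ₗ e.toLinearMap = Y ∘ₗ lowerBlock K i n := by
  let lowerInc : (Fin n → K) →ₗ[K] (Fin (i + n) → K) :=
    (blockSplit K i n).symm.toLinearMap ∘ₗ LinearMap.inl K _ _
  have hdecomp (x : Fin (i + n) → K) :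
      x = stdInc K i (i + n) (upperBlock K i n x) + lowerInc (lowerBlock K i n x) := by
    apply (blockSplit K i n).injective
    simp [lowerInc]
  have he_apply (x : Fin (i + n) → K) :
      e x = stdInc K i (i + n) (upperBlock K i n x) + e (lowerInc (lowerBlock K i n x)) := by
    conv_lhs => rw [hdecomp x]
    rw [map_add, show e (stdInc K i (i + n) _) = _ from LinearMap.congr_fun he _]
  refine ⟨upperBlock K i n ∘ₗ e.toLinearMap ∘ₗ lowerInc,
    lowerBlock K i n ∘ₗ e.toLinearMap ∘ₗ lowerInc, LinearMap.ext fun x => ?_,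
    LinearMap.ext fun x => ?_⟩
  · simpa using congrArg (Prod.snd ∘ blockSplit K i n) (he_apply x)
  · simpa using congrArg (Prod.fst ∘ blockSplit K i n) (he_apply x)

end Blocks

section Invariant

variable {K : Type} [Field K] {i n : ℕ}

lemma UofA_eq_rowSpace (A : (Fin i → K) →ₗ[K] (Fin (i + n) → K)) :
    UofA A = rowSpace (lowerBlock K i n ∘ₗ A) := by
  rw [UofA, rowSpace, rowOf_lowerBlock_comp, ← Fin.range_natAdd, ← Set.range_comp]

lemma rowSpace_eq_sup (A : (Fin i → K) →ₗ[K] (Fin (i + n) → K)) :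
    rowSpace A = rowSpace (upperBlock K i n ∘ₗ A) ⊔ rowSpace (lowerBlock K i n ∘ₗ A) := by
  rw [rowSpace, rowSpace, rowSpace, ← span_union, ← Set.Sum.elim_range,
    ← finSumFinEquiv.surjective.range_comp]
  congr 2
  funext r
  rcases r with r | r <;> rfl

lemma fofA_single (hij : i ≤ i + n) (A : (Fin i → K) →ₗ[K] (Fin (i + n) → K)) (r : Fin i) :
    fofA hij A (Pi.single r 1) = (UofA A).mkQ (rowOf (upperBlock K i n ∘ₗ A) r) := by
  rw [fofA, ← Pi.basisFun_apply, Module.Basis.constr_basis]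
  rfl

lemma range_fofA (hij : i ≤ i + n) (A : (Fin i → K) →ₗ[K] (Fin (i + n) → K)) :
    range (fofA hij A) = map (UofA A).mkQ (rowSpace (upperBlock K i n ∘ₗ A)) := by
  rw [fofA, Module.Basis.constr_range, rowSpace, ← span_image, ← Set.range_comp]
  rfl

lemma fofA_surjective_iff (hij : i ≤ i + n) (A : (Fin i → K) →ₗ[K] (Fin (i + n) → K)) :
    Function.Surjective (fofA hij A) ↔ Function.Injective A := by
  rw [← range_eq_top, range_fofA, map_mkQ_eq_top, ← rowSpace_eq_top_iff, rowSpace_eq_sup,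
    UofA_eq_rowSpace, sup_comm]

lemma invOf_eq_iff (hij : i ≤ i + n) (A B : (Fin i → K) →ₗ[K] (Fin (i + n) → K)) :
    invOf hij A = invOf hij B ↔
      UofA A = UofA B ∧ rowSpace (upperBlock K i n ∘ₗ B - upperBlock K i n ∘ₗ A) ≤ UofA A := by
  have hfofA (hU : UofA A = UofA B) :
      (quotEquivOfEq _ _ hU).toLinearMap ∘ₗ fofA hij A = fofA hij B ↔
        rowSpace (upperBlock K i n ∘ₗ B - upperBlock K i n ∘ₗ A) ≤ UofA A := by
    have hrow (r : Fin i) :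
        ((quotEquivOfEq _ _ hU).toLinearMap ∘ₗ fofA hij A) (Pi.single r 1) =
            fofA hij B (Pi.single r 1) ↔
          rowOf (upperBlock K i n ∘ₗ B - upperBlock K i n ∘ₗ A) r ∈ UofA A := by
      rw [comp_apply, fofA_single, fofA_single, LinearEquiv.coe_coe, mkQ_apply, mkQ_apply,
        quotEquivOfEq_mk, Submodule.Quotient.eq', neg_add_eq_sub, ← hU]
      rfl
    rw [rowSpace, span_le, Set.range_subset_iff]
    simp_rw [SetLike.mem_coe, ← hrow]
    refine ⟨fun h r => LinearMap.congr_fun h _, fun h => (Pi.basisFun K (Fin i)).ext fun r => ?_⟩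
    simpa using h r
  rw [invOf, invOf, sigma_mk_eq_iff_quotEquivOfEq_comp]
  exact ⟨fun ⟨hU, h⟩ => ⟨hU, (hfofA hU).1 h⟩, fun ⟨hU, h⟩ => ⟨hU, (hfofA hU).2 h⟩⟩

end Invariant

section Orbits

variable {K : Type} [Field K] {i n : ℕ}

lemma rowSpace_le_of_comp_stdInc (e : (Fin (i + n) → K) ≃ₗ[K] (Fin (i + n) → K))
    (he : e.toLinearMap ∘ₗ stdInc K i (i + n) = stdInc K i (i + n))
    (A : (Fin i → K) →ₗ[K] (Fin (i + n) → K)) :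
    rowSpace (lowerBlock K i n ∘ₗ e.toLinearMap ∘ₗ A) ≤ rowSpace (lowerBlock K i n ∘ₗ A) ∧
      rowSpace (upperBlock K i n ∘ₗ e.toLinearMap ∘ₗ A - upperBlock K i n ∘ₗ A) ≤
        rowSpace (lowerBlock K i n ∘ₗ A) := by
  obtain ⟨X, Y, hX, hY⟩ := exists_blocks_of_comp_stdInc e he
  refine ⟨(rowSpace_le_iff _ _).2 ⟨Y, ?_⟩, (rowSpace_le_iff _ _).2 ⟨X, ?_⟩⟩
  · exact LinearMap.ext fun x => (LinearMap.congr_fun hY (A x)).symm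
  · refine LinearMap.ext fun x => ?_
    simpa [eq_sub_iff_add_eq'] using (LinearMap.congr_fun hX (A x)).symm

lemma invOf_eq_iff_exists_equiv (hij : i ≤ i + n) (A B : (Fin i → K) →ₗ[K] (Fin (i + n) → K)) :
    invOf hij A = invOf hij B ↔
      ∃ e : (Fin (i + n) → K) ≃ₗ[K] (Fin (i + n) → K),
        e.toLinearMap ∘ₗ stdInc K i (i + n) = stdInc K i (i + n) ∧ e.toLinearMap ∘ₗ A = B := by
  simp only [invOf_eq_iff, UofA_eq_rowSpace]
  constructor
  · rintro ⟨hU, hupper⟩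
    obtain ⟨Y, hY⟩ := exists_linearEquiv_comp_eq_of_rowSpace_eq hU
    obtain ⟨X, hX⟩ := (rowSpace_le_iff _ _).1 hupper
    refine ⟨blockShear X Y, blockShear_comp_stdInc X Y, LinearMap.ext fun x => ?_⟩
    apply (blockSplit K i n).injective
    rw [comp_apply, LinearEquiv.coe_coe, blockSplit_blockShear, blockSplit_apply]
    refine Prod.ext (LinearMap.congr_fun hY x) ?_
    simpa [eq_sub_iff_add_eq'] using LinearMap.congr_fun hX x
  · rintro ⟨e, he, rfl⟩
    have he_symm : e.symm.toLinearMap ∘ₗ stdInc K i (i + n) = stdInc K i (i + n) :=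
      LinearMap.ext fun v => e.symm_apply_eq.2 (LinearMap.congr_fun he v).symm
    have hA : A = e.symm.toLinearMap ∘ₗ e.toLinearMap ∘ₗ A := by ext; simp
    obtain ⟨hle, hupper⟩ := rowSpace_le_of_comp_stdInc e he A
    refine ⟨le_antisymm ?_ hle, hupper⟩
    conv_lhs => rw [hA]
    exact (rowSpace_le_of_comp_stdInc e.symm he_symm _).1

end Orbits

lemma exists_invOf_eq {K : Type} [Field K] {i n : ℕ} (hij : i ≤ i + n)
    {U : Submodule K (Fin i → K)} (hU : Module.finrank K U ≤ n)
    (f : (Fin i → K) →ₗ[K] (Fin i → K) ⧸ U) :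
    ∃ A : (Fin i → K) →ₗ[K] (Fin (i + n) → K), invOf hij A = ⟨U, f⟩ := by
  choose v hv using fun r => U.mkQ_surjective (f (Pi.single r 1))
  obtain ⟨w, hw⟩ := U.exists_fin_span_range_eq hU
  let A := (Matrix.of (Fin.append v w)).mulVecLin
  have hupper : rowOf (upperBlock K i n ∘ₗ A) = v := by
    rw [rowOf_upperBlock_comp, rowOf_mulVecLin]
    exact funext (Fin.append_left v w)
  have hUA : UofA A = U := by
    rw [UofA_eq_rowSpace, rowSpace, rowOf_lowerBlock_comp, rowOf_mulVecLin, ← hw]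
    exact congrArg (span K ∘ Set.range) (funext (Fin.append_right v w))
  refine ⟨A, (sigma_mk_eq_iff_quotEquivOfEq_comp _ _).2 ⟨hUA, ?_⟩⟩
  refine (Pi.basisFun K (Fin i)).ext fun r => ?_
  simp [fofA_single, hupper, ← hv]

theorem stmt_6_general (F : Type) [Field F] (i j : ℕ) (hij : i ≤ j)
    (h2i : 2 * i ≤ j) :
    (∀ A B : (Fin i → F) →ₗ[F] (Fin j → F),
      Function.Injective A → Function.Injective B →
        (invOf hij A = invOf hij B ↔
          ∃ e : (Fin j → F) ≃ₗ[F] (Fin j → F),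
            e.toLinearMap ∘ₗ stdInc F i j = stdInc F i j ∧
            e.toLinearMap ∘ₗ A = B)) ∧
    (∀ A : (Fin i → F) →ₗ[F] (Fin j → F), Function.Injective A →
      Function.Surjective (fofA hij A)) ∧
    (∀ (U : Submodule F (Fin i → F)) (f : (Fin i → F) →ₗ[F] ((Fin i → F) ⧸ U)),
      Function.Surjective f →
        ∃ A : (Fin i → F) →ₗ[F] (Fin j → F),
          Function.Injective A ∧ invOf hij A = ⟨U, f⟩) := by
  obtain ⟨n, rfl⟩ := Nat.exists_eq_add_of_le hij
  refine ⟨fun A B _ _ => invOf_eq_iff_exists_equiv hij A B,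
    fun A hA => (fofA_surjective_iff hij A).2 hA, fun U f hf => ?_⟩
  have hU : Module.finrank F U ≤ n :=
    U.finrank_le.trans (by rw [Module.finrank_fin_fun]; omega)
  obtain ⟨A, hA⟩ := exists_invOf_eq hij hU f
  obtain ⟨rfl, hfA⟩ := Sigma.mk.inj_iff.1 hA
  exact ⟨A, (fofA_surjective_iff hij A).1 (eq_of_heq hfA ▸ hf), hA⟩

/-- for `j ≥ 2i`, the assignment `A ↦ (U_A, f_A)` induces a
bijection from the `H_{i,j}`-orbits of injective linear maps `F_q^i → F_q^j`
(`H_{i,j}` being the stabilizer of the standard inclusion in `GL_j(F_q)`,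
acting by postcomposition) onto the pairs `(U, f)` with `U ⊆ F_q^i` a subspace
and `f : F_q^i → F_q^i/U` surjective linear. -/
theorem stmt_6 (F : Type) [Field F] [Fintype F] (i j : ℕ) (hij : i ≤ j)
    (h2i : 2 * i ≤ j) :
    (∀ A B : (Fin i → F) →ₗ[F] (Fin j → F),
      Function.Injective A → Function.Injective B →
        (invOf hij A = invOf hij B ↔
          ∃ e : (Fin j → F) ≃ₗ[F] (Fin j → F),
            e.toLinearMap ∘ₗ stdInc F i j = stdInc F i j ∧
            e.toLinearMap ∘ₗ A = B)) ∧
    (∀ A : (Fin i → F) →ₗ[F] (Fin j → F), Function.Injective A →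
      Function.Surjective (fofA hij A)) ∧
    (∀ (U : Submodule F (Fin i → F)) (f : (Fin i → F) →ₗ[F] ((Fin i → F) ⧸ U)),
      Function.Surjective f →
        ∃ A : (Fin i → F) →ₗ[F] (Fin j → F),
          Function.Injective A ∧ invOf hij A = ⟨U, f⟩) :=
  stmt_6_general F i j hij h2i
end

section
/- Let C be a locally finite EI category of type A∞ satisfying the transitivity condition, i.e., for each i the automorphism group G_{i+1} = C(i+1,i+1) acts transitively on C(i,i+1) by postcomposition. Then for any i < j, the group G_j acts transitively on C(i,j) by postcomposition. -/
/-- A skeletal locally finite EI category with objects the non-negative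
integers and `Hom i j` nonempty iff `i ≤ j`. -/
structure EICat where
  Hom : ℕ → ℕ → Type
  idm : ∀ i, Hom i i
  comp : ∀ {i j l : ℕ}, Hom j l → Hom i j → Hom i l
  id_comp : ∀ {i j : ℕ} (f : Hom i j), comp (idm j) f = f
  comp_id : ∀ {i j : ℕ} (f : Hom i j), comp f (idm i) = f
  assoc : ∀ {i j l m : ℕ} (f : Hom l m) (g : Hom j l) (h : Hom i j),
    comp (comp f g) h = comp f (comp g h)
  homFinite : ∀ i j, Finite (Hom i j)
  ei : ∀ (i : ℕ) (f : Hom i i), ∃ g : Hom i i, comp f g = idm i ∧ comp g f = idm i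
  nonempty_iff : ∀ i j, Nonempty (Hom i j) ↔ i ≤ j

/-- A morphism is an isomorphism. -/
def EICat.IsIso (C : EICat) {i j : ℕ} (f : C.Hom i j) : Prop :=
  ∃ g : C.Hom j i, C.comp f g = C.idm j ∧ C.comp g f = C.idm i

/-- A morphism is unfactorizable. -/
def EICat.Unfact (C : EICat) {i j : ℕ} (f : C.Hom i j) : Prop :=
  ¬ C.IsIso f ∧ ∀ (l : ℕ) (b₂ : C.Hom i l) (b₁ : C.Hom l j),
    f = C.comp b₁ b₂ → C.IsIso b₁ ∨ C.IsIso b₂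

/-- `C` is of type `A∞`: the underlying quiver of unfactorizable morphisms is
`0 → 1 → 2 → ⋯`. -/
def EICat.TypeAInf (C : EICat) : Prop :=
  ∀ i j : ℕ, (∃ f : C.Hom i j, C.Unfact f) ↔ j = i + 1

/-- The transitivity condition: `G_{i+1}` acts transitively on `C(i, i+1)`. -/
def EICat.TransCond (C : EICat) : Prop :=
  ∀ (i : ℕ) (f g : C.Hom i (i + 1)), ∃ e : C.Hom (i + 1) (i + 1), C.comp e f = g

/-!
In type `A∞` every morphism `i → j` with `i < j` factors through `i + 1`: unless `j = i + 1` it is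
not unfactorizable, so it splits through some `i < l < j`, and one recurses into the first factor.
Writing `f = f' ∘ a` and `g = g' ∘ a'` with `a a' : i → i + 1`, transitivity at level `i` gives
`e₁ ∘ a = a'`, and induction on `j - i` gives `e ∘ f' = g' ∘ e₁`, whence `e ∘ f = g`.
-/

namespace EICat

variable (C : EICat)

lemma not_isIso_of_lt {i j : ℕ} (hij : i < j) (f : C.Hom i j) : ¬ C.IsIso f := by
  rintro ⟨g, -, -⟩
  have := (C.nonempty_iff j i).mp ⟨g⟩
  omega

lemma isIso_of_endo {i : ℕ} (f : C.Hom i i) : C.IsIso f :=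
  C.ei i f

variable {C}

lemma exists_eq_comp_of_lt_of_ne_succ (hA : C.TypeAInf) {i j : ℕ} (hij : i < j)
    (hj : j ≠ i + 1) (f : C.Hom i j) :
    ∃ l, i < l ∧ l < j ∧ ∃ (b₁ : C.Hom l j) (b₂ : C.Hom i l), f = C.comp b₁ b₂ := by
  have hf : ¬ C.Unfact f := fun hu => hj ((hA i j).mp ⟨f, hu⟩)
  simp only [Unfact, C.not_isIso_of_lt hij f, not_false_eq_true, true_and, not_forall,
    not_or] at hf
  obtain ⟨l, b₂, b₁, rfl, hb₁, hb₂⟩ := hf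
  have hil : i ≤ l := (C.nonempty_iff i l).mp ⟨b₂⟩
  have hlj : l ≤ j := (C.nonempty_iff l j).mp ⟨b₁⟩
  refine ⟨l, lt_of_le_of_ne hil ?_, lt_of_le_of_ne hlj ?_, b₁, b₂, rfl⟩
  · rintro rfl
    exact hb₂ (C.isIso_of_endo b₂)
  · rintro rfl
    exact hb₁ (C.isIso_of_endo b₁)

lemma exists_eq_comp_succ (hA : C.TypeAInf) {i j : ℕ} (hij : i < j) (f : C.Hom i j) :
    ∃ (f' : C.Hom (i + 1) j) (a : C.Hom i (i + 1)), f = C.comp f' a := by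
  rcases eq_or_ne j (i + 1) with rfl | hj
  · exact ⟨C.idm (i + 1), f, (C.id_comp f).symm⟩
  obtain ⟨l, hil, hlj, b₁, b₂, rfl⟩ := exists_eq_comp_of_lt_of_ne_succ hA hij hj f
  obtain ⟨b₂', a, rfl⟩ := exists_eq_comp_succ hA hil b₂
  exact ⟨C.comp b₁ b₂', a, (C.assoc b₁ b₂' a).symm⟩
termination_by j

lemma exists_comp_eq (hA : C.TypeAInf) (hT : C.TransCond) {i j : ℕ} (hij : i < j)
    (f g : C.Hom i j) : ∃ e : C.Hom j j, C.comp e f = g := by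
  rcases eq_or_ne j (i + 1) with rfl | hj
  · exact hT i f g
  obtain ⟨f', a, rfl⟩ := exists_eq_comp_succ hA hij f
  obtain ⟨g', a', rfl⟩ := exists_eq_comp_succ hA hij g
  obtain ⟨e₁, rfl⟩ := hT i a a'
  obtain ⟨e, he⟩ := exists_comp_eq hA hT (by omega : i + 1 < j) f' (C.comp g' e₁)
  exact ⟨e, by rw [← C.assoc, he, C.assoc]⟩
termination_by j - i

end EICat

/-- in a locally finite EI category of type `A∞` satisfying the
transitivity condition, `G_j` acts transitively on `C(i,j)` for all `i < j`. -/
theorem stmt_7 (C : EICat) (hA : C.TypeAInf) (hT : C.TransCond) :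
    ∀ i j : ℕ, i < j → ∀ f g : C.Hom i j, ∃ e : C.Hom j j, C.comp e f = g :=
  fun _ _ hij => C.exists_comp_eq hA hT hij
end

section
/- Let C be a locally finite EI category of type A∞ satisfying the transitivity condition, with fixed morphisms α_j ∈ C(j, j+1) and α_{i,j} = α_{j−1} ⋯ α_i ∈ C(i,j), and H_{i,j} = Stab_{G_j}(α_{i,j}). If the induced map μ_{i,j} : H_{i,j}\C(i,j) → H_{i,j+1}\C(i,j+1) on orbit sets (sending the orbit of γ to the orbit of α_j γ) is injective, then the map m_{i,j} : C(i,j) → C(i,j+1), γ ↦ α_j γ, is injective. -/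
/-- The chosen morphism `α_{i,j} = α_{j-1} ⋯ α_{i+1} α_i ∈ C(i,j)`, built from a
choice of morphisms `α_j ∈ C(j, j+1)`. -/
def EICat.alph (C : EICat) (α : ∀ j, C.Hom j (j + 1)) (i : ℕ) :
    ∀ {j : ℕ}, i ≤ j → C.Hom i j :=
  fun {j} h => Nat.leRecOn h (fun {n} p => C.comp (α n) p) (C.idm i)

/-- `γ, γ' ∈ C(i,j)` lie in the same `H_{i,j}`-orbit, where
`H_{i,j} = Stab_{G_j}(α_{i,j})`. -/
def EICat.orbRel (C : EICat) (α : ∀ j, C.Hom j (j + 1)) {i j : ℕ} (hij : i ≤ j)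
    (γ γ' : C.Hom i j) : Prop :=
  ∃ h : C.Hom j j, C.comp h (C.alph α i hij) = C.alph α i hij ∧ C.comp h γ = γ'

/-- `δ, δ' ∈ C(i,j+1)` lie in the same `H_{i,j+1}`-orbit, where
`α_{i,j+1} = α_j α_{i,j}`. -/
def EICat.orbRelS (C : EICat) (α : ∀ j, C.Hom j (j + 1)) {i j : ℕ} (hij : i ≤ j)
    (δ δ' : C.Hom i (j + 1)) : Prop :=
  ∃ h : C.Hom (j + 1) (j + 1),
    C.comp h (C.comp (α j) (C.alph α i hij)) = C.comp (α j) (C.alph α i hij) ∧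
    C.comp h δ = δ'

/-!
Under the `A∞` condition every morphism into `j + 1` factors through some morphism `j → j + 1`,
so by induction the transitivity condition propagates: `G_j` acts transitively on `C(i, j)`.
Transitivity also lets any `e ∈ G_j` be moved past `α_j`, as `α_j e = u α_j` with `u ∈ G_{j+1}`.
Hence if `α_j γ = α_j γ'` with `γ = g α_{i,j}`, then `α_j α_{i,j} = α_j (g⁻¹ γ')`; injectivity of
`μ_{i,j}` puts `g⁻¹ γ'` in the `H_{i,j}`-orbit of `α_{i,j}`, which is `{α_{i,j}}`, so `γ' = γ`.
-/

namespace EICat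

variable (C : EICat)

lemma le_of_hom {i j : ℕ} (f : C.Hom i j) : i ≤ j :=
  (C.nonempty_iff i j).mp ⟨f⟩

lemma exists_eq_comp_of_hom_succ (hA : C.TypeAInf) {i j : ℕ} (hij : i ≤ j)
    (γ : C.Hom i (j + 1)) : ∃ (f : C.Hom j (j + 1)) (γ' : C.Hom i j), γ = C.comp f γ' := by
  by_cases hu : C.Unfact γ
  · obtain rfl : j = i := by
      have := (hA i (j + 1)).mp ⟨γ, hu⟩
      omega
    exact ⟨γ, C.idm j, (C.comp_id γ).symm⟩
  · have hγ : ¬ C.IsIso γ := fun ⟨g, _⟩ => by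
      have := C.le_of_hom g
      omega
    obtain ⟨l, b₂, b₁, rfl, hb₁, hb₂⟩ : ∃ (l : ℕ) (b₂ : C.Hom i l) (b₁ : C.Hom l (j + 1)),
        γ = C.comp b₁ b₂ ∧ ¬ C.IsIso b₁ ∧ ¬ C.IsIso b₂ := by
      by_contra! h
      exact hu ⟨hγ, fun l b₂ b₁ hb => or_iff_not_imp_left.mpr (h l b₂ b₁ hb)⟩
    -- endomorphisms are isomorphisms, so the factorization is through an intermediate object
    have hil : i ≠ l := by
      rintro rfl
      exact hb₂ (C.ei i b₂)
    have hlj : l ≠ j + 1 := by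
      rintro rfl
      exact hb₁ (C.ei _ b₁)
    have := C.le_of_hom b₁
    obtain ⟨f, b₁', rfl⟩ := exists_eq_comp_of_hom_succ hA (by omega : l ≤ j) b₁
    exact ⟨f, C.comp b₁' b₂, C.assoc _ _ _⟩
termination_by j - i
decreasing_by
  have := C.le_of_hom b₂
  omega

lemma comp_comp_endo_eq_of_comp_eq (hT : C.TransCond) {i j : ℕ} (f : C.Hom j (j + 1))
    (e : C.Hom j j) {x y : C.Hom i j} (h : C.comp f x = C.comp f y) :
    C.comp f (C.comp e x) = C.comp f (C.comp e y) := by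
  obtain ⟨u, hu⟩ := hT j f (C.comp f e)
  rw [← C.assoc, ← C.assoc, ← hu, C.assoc, C.assoc, h]

variable (α : ∀ j, C.Hom j (j + 1))

lemma alph_self (i : ℕ) : C.alph α i le_rfl = C.idm i :=
  Nat.leRecOn_self _

lemma alph_succ {i j : ℕ} (hij : i ≤ j) :
    C.alph α i (hij.trans j.le_succ) = C.comp (α j) (C.alph α i hij) :=
  Nat.leRecOn_succ hij _

lemma exists_eq_comp_alph (hA : C.TypeAInf) (hT : C.TransCond) {i j : ℕ} (hij : i ≤ j)
    (γ : C.Hom i j) : ∃ g : C.Hom j j, γ = C.comp g (C.alph α i hij) := by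
  induction j, hij using Nat.le_induction with
  | base => exact ⟨γ, by rw [C.alph_self, C.comp_id]⟩
  | succ j hij ih =>
    obtain ⟨f, γ', rfl⟩ := C.exists_eq_comp_of_hom_succ hA hij γ
    obtain ⟨g, rfl⟩ := ih γ'
    obtain ⟨e, rfl⟩ := hT j (α j) f
    obtain ⟨u, hu⟩ := hT j (α j) (C.comp (α j) g)
    refine ⟨C.comp e u, ?_⟩
    rw [C.alph_succ α hij, C.assoc, ← C.assoc (α j), ← hu, C.assoc, ← C.assoc]

end EICat

/-- if the induced map `μ_{i,j}` on orbit sets is injective,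
then `m_{i,j} : C(i,j) → C(i,j+1)`, `γ ↦ α_j γ`, is injective. -/
theorem stmt_8 (C : EICat) (hA : C.TypeAInf) (hT : C.TransCond)
    (α : ∀ j, C.Hom j (j + 1)) (i j : ℕ) (hij : i ≤ j)
    (hμ : ∀ γ γ' : C.Hom i j,
      C.orbRelS α hij (C.comp (α j) γ) (C.comp (α j) γ') → C.orbRel α hij γ γ') :
    Function.Injective (fun γ : C.Hom i j => C.comp (α j) γ) := by
  intro γ γ' h
  obtain ⟨g, rfl⟩ := C.exists_eq_comp_alph α hA hT hij γ
  obtain ⟨g', hgg', hg'g⟩ := C.ei j g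
  have hα : C.comp (α j) (C.alph α i hij) = C.comp (α j) (C.comp g' γ') := by
    have := C.comp_comp_endo_eq_of_comp_eq hT (α j) g' h
    rwa [← C.assoc g', hg'g, C.id_comp] at this
  obtain ⟨k, hk, hkγ'⟩ :=
    hμ _ (C.comp g' γ') ⟨C.idm (j + 1), C.id_comp _, by rw [C.id_comp, hα]⟩
  rw [← hk, hkγ', ← C.assoc, hgg', C.id_comp]
end

section
/- Let C be a locally finite EI category of type A∞ satisfying the transitivity condition, with α_j ∈ C(j,j+1), α_{i,j} = α_{j−1}⋯α_i, and H_{i,j} = Stab_{G_j}(α_{i,j}). For any h ∈ H_{i,j} there exists g ∈ H_{i,j+1} such that g α_j γ = α_j h γ for all γ ∈ C(i,j). Consequently the map γ ↦ α_j γ sends each H_{i,j}-orbit in C(i,j) into a single H_{i,j+1}-orbit in C(i,j+1). -/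
namespace EICat

theorem comp_comp_of_comp_eq (C : EICat) {i j k l m : ℕ} {g : C.Hom k m} {f : C.Hom j k}
    {f' : C.Hom l m} {h : C.Hom j l} (hg : C.comp g f = C.comp f' h) (γ : C.Hom i j) :
    C.comp g (C.comp f γ) = C.comp f' (C.comp h γ) := by
  rw [← C.assoc, hg, C.assoc]

theorem TransCond.exists_comp_comp_eq {C : EICat} (hT : C.TransCond) {j : ℕ}
    (f : C.Hom j (j + 1)) (h : C.Hom j j) :
    ∃ g : C.Hom (j + 1) (j + 1), ∀ {i : ℕ} (γ : C.Hom i j),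
      C.comp g (C.comp f γ) = C.comp f (C.comp h γ) := by
  obtain ⟨g, hg⟩ := hT j f (C.comp f h)
  exact ⟨g, C.comp_comp_of_comp_eq hg⟩

end EICat

theorem stmt_9_general (C : EICat) (hT : C.TransCond)
    (α : ∀ j, C.Hom j (j + 1)) (i j : ℕ) (hij : i ≤ j) :
    (∀ h : C.Hom j j, C.comp h (C.alph α i hij) = C.alph α i hij →
      ∃ g : C.Hom (j + 1) (j + 1),
        C.comp g (C.comp (α j) (C.alph α i hij)) = C.comp (α j) (C.alph α i hij) ∧
        ∀ γ : C.Hom i j, C.comp g (C.comp (α j) γ) = C.comp (α j) (C.comp h γ)) ∧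
    (∀ γ γ' : C.Hom i j, C.orbRel α hij γ γ' →
      C.orbRelS α hij (C.comp (α j) γ) (C.comp (α j) γ')) := by
  have lift : ∀ h : C.Hom j j, C.comp h (C.alph α i hij) = C.alph α i hij →
      ∃ g : C.Hom (j + 1) (j + 1),
        C.comp g (C.comp (α j) (C.alph α i hij)) = C.comp (α j) (C.alph α i hij) ∧
        ∀ γ : C.Hom i j, C.comp g (C.comp (α j) γ) = C.comp (α j) (C.comp h γ) := by
    intro h hh
    obtain ⟨g, hg⟩ := hT.exists_comp_comp_eq (α j) h
    exact ⟨g, by rw [hg, hh], hg⟩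
  refine ⟨lift, fun γ γ' ⟨h, hh, hγ⟩ => ?_⟩
  obtain ⟨g, hg_stab, hg⟩ := lift h hh
  exact ⟨g, hg_stab, by rw [hg, hγ]⟩

/-- for any `h ∈ H_{i,j}` there is `g ∈ H_{i,j+1}` with
`g α_j γ = α_j h γ` for all `γ ∈ C(i,j)`; consequently `γ ↦ α_j γ` maps each
`H_{i,j}`-orbit into a single `H_{i,j+1}`-orbit. -/
theorem stmt_9 (C : EICat) (hA : C.TypeAInf) (hT : C.TransCond)
    (α : ∀ j, C.Hom j (j + 1)) (i j : ℕ) (hij : i ≤ j) :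
    (∀ h : C.Hom j j, C.comp h (C.alph α i hij) = C.alph α i hij →
      ∃ g : C.Hom (j + 1) (j + 1),
        C.comp g (C.comp (α j) (C.alph α i hij)) = C.comp (α j) (C.alph α i hij) ∧
        ∀ γ : C.Hom i j, C.comp g (C.comp (α j) γ) = C.comp (α j) (C.comp h γ)) ∧
    (∀ γ γ' : C.Hom i j, C.orbRel α hij γ γ' →
      C.orbRelS α hij (C.comp (α j) γ) (C.comp (α j) γ')) :=
  stmt_9_general C hT α i j hij
end

section
/- Let C be a strongly locally finite EI category. Then any morphism of C which is not an isomorphism can be written as a composition β₁ ⋯ β_r of unfactorizable morphisms. -/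
open CategoryTheory

/-- A morphism is unfactorizable: not an isomorphism, and in any factorization
one of the two factors is an isomorphism. -/
def Unfact {C : Type} [SmallCategory C] {X Y : C} (f : X ⟶ Y) : Prop :=
  ¬ IsIso f ∧ ∀ (Z : C) (b₂ : X ⟶ Z) (b₁ : Z ⟶ Y), f = b₂ ≫ b₁ → IsIso b₁ ∨ IsIso b₂

/-- The predicate of being a composition `β₁ ⋯ β_r` of unfactorizable
morphisms. -/
inductive CompOfUnfact {C : Type} [SmallCategory C] : ∀ {X Y : C}, (X ⟶ Y) → Prop
  | single {X Y : C} (f : X ⟶ Y) : Unfact f → CompOfUnfact f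
  | comp {X Y Z : C} (f : X ⟶ Y) (g : Y ⟶ Z) :
      CompOfUnfact f → Unfact g → CompOfUnfact (f ≫ g)

/-
The objects `Z` with `X ≤ Z ≤ Y` form a finite set `[X, Y]` (`objInterval X Y`).  If `f = b₂ ≫ b₁` with neither
factor invertible, then `[X, Z]` misses `Y` and `[Z, Y]` misses `X`, since in an EI category
morphisms in both directions are isomorphisms.  So both intervals are strictly smaller than
`[X, Y]`, and induction on the size of the interval factors `f` into unfactorizable morphisms.
-/

namespace CategoryTheory

variable {C : Type} [SmallCategory C]

theorem isIso_of_isIso_comp_of_isIso_comp {A B : C} (g : A ⟶ B) (h : B ⟶ A)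
    [IsIso (g ≫ h)] [IsIso (h ≫ g)] : IsIso g :=
  have : Mono g := mono_of_mono g h
  have : IsSplitEpi g := IsSplitEpi.mk' ⟨inv (h ≫ g) ≫ h, by simp⟩
  isIso_of_mono_of_isSplitEpi g

theorem CompOfUnfact.append {X Y Z : C} {f : X ⟶ Y} {g : Y ⟶ Z} (hf : CompOfUnfact f)
    (hg : CompOfUnfact g) : CompOfUnfact (f ≫ g) := by
  induction hg with
  | single g hg => exact .comp f g hf hg
  | comp a b _ hb ih =>
    rw [← Category.assoc]
    exact .comp _ b ih hb

theorem exists_factorization_of_not_unfact {X Y : C} {f : X ⟶ Y} (hf : ¬IsIso f)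
    (hu : ¬Unfact f) : ∃ (Z : C) (b₂ : X ⟶ Z) (b₁ : Z ⟶ Y),
      f = b₂ ≫ b₁ ∧ ¬IsIso b₁ ∧ ¬IsIso b₂ := by
  simpa [Unfact, hf, not_or] using hu

def objInterval (X Y : C) : Set C := {Z | Nonempty (X ⟶ Z) ∧ Nonempty (Z ⟶ Y)}

section EI

variable (hEI : ∀ (X : C) (f : X ⟶ X), IsIso f)
include hEI

theorem isIso_of_reverse_hom {A B : C} {g : A ⟶ B} (h : B ⟶ A) : IsIso g :=
  have := hEI A (g ≫ h)
  have := hEI B (h ≫ g)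
  isIso_of_isIso_comp_of_isIso_comp g h

theorem objInterval_ssubset_of_not_isIso_right {X Y Z : C} (b₂ : X ⟶ Z) {b₁ : Z ⟶ Y}
    (hb₁ : ¬IsIso b₁) : objInterval X Z ⊂ objInterval X Y := by
  refine (Set.ssubset_iff_of_subset ?_).mpr ⟨Y, ?_, ?_⟩
  · rintro W ⟨hXW, ⟨g⟩⟩
    exact ⟨hXW, ⟨g ≫ b₁⟩⟩
  · exact ⟨⟨b₂ ≫ b₁⟩, ⟨𝟙 Y⟩⟩
  · rintro ⟨-, ⟨g⟩⟩
    exact hb₁ (isIso_of_reverse_hom hEI g)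

theorem objInterval_ssubset_of_not_isIso_left {X Y Z : C} {b₂ : X ⟶ Z} (hb₂ : ¬IsIso b₂)
    (b₁ : Z ⟶ Y) : objInterval Z Y ⊂ objInterval X Y := by
  refine (Set.ssubset_iff_of_subset ?_).mpr ⟨X, ?_, ?_⟩
  · rintro W ⟨⟨g⟩, hWY⟩
    exact ⟨⟨b₂ ≫ g⟩, hWY⟩
  · exact ⟨⟨𝟙 X⟩, ⟨b₂ ≫ b₁⟩⟩
  · rintro ⟨⟨g⟩, -⟩
    exact hb₂ (isIso_of_reverse_hom hEI g)

end EI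

end CategoryTheory

theorem stmt_10_general {C : Type} [SmallCategory C]
    (hEI : ∀ (X : C) (f : X ⟶ X), IsIso f)
    (hslf : ∀ X Y : C, {Z : C | Nonempty (X ⟶ Z) ∧ Nonempty (Z ⟶ Y)}.Finite)
    {X Y : C} (f : X ⟶ Y) (hf : ¬ IsIso f) : CompOfUnfact f := by
  induction hn : (objInterval X Y).ncard using Nat.strong_induction_on generalizing X Y with
  | _ n ih =>
  by_cases hu : Unfact f
  · exact .single f hu
  obtain ⟨Z, b₂, b₁, rfl, hb₁, hb₂⟩ := exists_factorization_of_not_unfact hf hu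
  have hXZ := Set.ncard_lt_ncard (objInterval_ssubset_of_not_isIso_right hEI b₂ hb₁) (hslf X Y)
  have hZY := Set.ncard_lt_ncard (objInterval_ssubset_of_not_isIso_left hEI hb₂ b₁) (hslf X Y)
  exact (ih _ (hn ▸ hXZ) b₂ hb₂ rfl).append (ih _ (hn ▸ hZY) b₁ hb₁ rfl)

/-- in a skeletal, strongly locally finite EI category, any
morphism which is not an isomorphism is a composition of unfactorizable
morphisms. -/
theorem stmt_10 {C : Type} [SmallCategory C]
    (hskel : Skeletal C)
    (hEI : ∀ (X : C) (f : X ⟶ X), IsIso f)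
    (hfin : ∀ X Y : C, Finite (X ⟶ Y))
    (hslf : ∀ X Y : C, {Z : C | Nonempty (X ⟶ Z) ∧ Nonempty (Z ⟶ Y)}.Finite)
    {X Y : C} (f : X ⟶ Y) (hf : ¬ IsIso f) : CompOfUnfact f :=
  stmt_10_general hEI hslf f hf
end

section
/- Let q be a prime power, i a non-negative integer, and j ≥ 3i. Let H_{i,j} ≤ GL_j(F_q) be the subgroup of block-diagonal matrices diag(I_i, Y) with Y ∈ GL_{j−i}(F_q). Then the natural map from double cosets H_{i,j}\GL_j(F_q)/H_{i,j} to H_{i,j+1}\GL_{j+1}(F_q)/H_{i,j+1}, induced by the standard inclusion GL_j(F_q) ↪ GL_{j+1}(F_q) (extending a matrix by a 1 in position (j+1,j+1)), is surjective. -/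
/-- The standard inclusion of `j × j` matrices into `(j+1) × (j+1)` matrices,
extending by a `1` in position `(j+1, j+1)`. -/
def extMat {F : Type} [Field F] {j : ℕ} (M : Matrix (Fin j) (Fin j) F) :
    Matrix (Fin (j + 1)) (Fin (j + 1)) F :=
  fun r s =>
    if hr : (r : ℕ) < j then
      (if hs : (s : ℕ) < j then M ⟨r, hr⟩ ⟨s, hs⟩ else 0)
    else (if (s : ℕ) < j then 0 else 1)

/-- Membership in `H_{i,n} ≤ GL_n(F)`: block diagonal matrices `diag(I_i, Y)`,
i.e. matrices agreeing with the identity on all entries with row or column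
index `< i`. -/
def inHblock {F : Type} [Field F] {n : ℕ} (i : ℕ) (h : GL (Fin n) F) : Prop :=
  ∀ r s : Fin n, ((r : ℕ) < i ∨ (s : ℕ) < i) →
    (h : Matrix (Fin n) (Fin n) F) r s = if r = s then 1 else 0

/-!
Write `F^(j+1) = C ⊕ E`, with `C` spanned by the first `i` standard basis vectors and `E` by the
others. Then `H_{i,j+1}` consists of the automorphisms that are the identity on `C` and preserve
`E`, and `ι(GL_j)` of those fixing the last basis vector `e` and the last coordinate functional
`ε`. The space `E ∩ X⁻¹E` has dimension at least `j + 1 - 2i > i`, while `E ∩ (C + X⁻¹C)` has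
dimension at most `i`; so some `c ∈ E ∩ X⁻¹E` has `X c ∉ C + X C`, and some functional `δ`
vanishing on `C + X C` has `δ (X c) = 1`. Since `H` acts on `E` through all of `GL(E)`, it is transitive on
pairs (vector of `E`, functional vanishing on `C`) with pairing `1`. Taking `h ∈ H` with
`h e = X c`, `δ ∘ h = ε` and `h' ∈ H` with `h' c = e`, `ε ∘ h' = δ ∘ X`, the automorphism
`h⁻¹ X h'⁻¹` fixes `e` and `ε`, i.e. lies in `ι(GL_j)`.
-/

open Matrix Module

section Abstract

variable {F V : Type*} [Field F] [AddCommGroup V] [Module F V]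

namespace Module.Dual

def kerProdEquiv (δ : Dual F V) {w : V} (hw : δ w = 1) : V ≃ₗ[F] LinearMap.ker δ × F where
  toFun x := (⟨x - δ x • w, by simp [hw]⟩, δ x)
  invFun p := p.1 + p.2 • w
  map_add' x y := by
    ext <;> simp only [map_add, add_smul, Prod.mk_add_mk, AddMemClass.mk_add_mk]
    abel
  map_smul' a x := by ext <;> simp [smul_sub, mul_smul]
  left_inv x := by simp
  right_inv p := by ext <;> simp [hw, LinearMap.mem_ker.1 p.1.2]

@[simp]
lemma kerProdEquiv_apply_snd (δ : Dual F V) {w : V} (hw : δ w = 1) (x : V) :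
    (kerProdEquiv δ hw x).2 = δ x := rfl

@[simp]
lemma kerProdEquiv_symm_apply (δ : Dual F V) {w : V} (hw : δ w = 1) (k : LinearMap.ker δ)
    (a : F) : (kerProdEquiv δ hw).symm (k, a) = k + a • w := rfl

@[simp]
lemma kerProdEquiv_apply_self (δ : Dual F V) {w : V} (hw : δ w = 1) :
    kerProdEquiv δ hw w = (0, 1) := by
  ext <;> simp [kerProdEquiv, hw]

lemma finrank_ker_add_one [FiniteDimensional F V] (δ : Dual F V) {w : V} (hw : δ w = 1) :
    finrank F (LinearMap.ker δ) + 1 = finrank F V := by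
  rw [(kerProdEquiv δ hw).finrank_eq, finrank_prod, finrank_self]

end Module.Dual

theorem exists_linearEquiv_apply_eq_and_comp_eq [FiniteDimensional F V] {δ ε : Dual F V}
    {w e : V} (hδw : δ w = 1) (hεe : ε e = 1) :
    ∃ Y : V ≃ₗ[F] V, Y w = e ∧ ∀ x, ε (Y x) = δ x := by
  have hker : finrank F (LinearMap.ker δ) = finrank F (LinearMap.ker ε) := by
    have := δ.finrank_ker_add_one hδw
    have := ε.finrank_ker_add_one hεe
    omega
  refine ⟨(δ.kerProdEquiv hδw).trans (((LinearEquiv.ofFinrankEq _ _ hker).prodCongr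
    (LinearEquiv.refl F F)).trans (ε.kerProdEquiv hεe).symm), ?_, fun x => ?_⟩
  · simp
  · simp [hεe]

variable {C E : Submodule F V}

noncomputable def LinearEquiv.ofIsCompl (hCE : IsCompl C E) (Z : C ≃ₗ[F] C) (Y : E ≃ₗ[F] E) :
    V ≃ₗ[F] V :=
  (C.prodEquivOfIsCompl E hCE).symm ≪≫ₗ Z.prodCongr Y ≪≫ₗ C.prodEquivOfIsCompl E hCE

lemma LinearEquiv.ofIsCompl_apply_left (hCE : IsCompl C E) (Z : C ≃ₗ[F] C) (Y : E ≃ₗ[F] E)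
    (x : C) : LinearEquiv.ofIsCompl hCE Z Y x = Z x := by
  simp [LinearEquiv.ofIsCompl]

lemma LinearEquiv.ofIsCompl_apply_right (hCE : IsCompl C E) (Z : C ≃ₗ[F] C) (Y : E ≃ₗ[F] E)
    (x : E) : LinearEquiv.ofIsCompl hCE Z Y x = Y x := by
  simp [LinearEquiv.ofIsCompl]

theorem exists_linearEquiv_fixing_of_isCompl [FiniteDimensional F V] (hCE : IsCompl C E)
    {δ ε : Dual F V} {w e : V} (hw : w ∈ E) (he : e ∈ E) (hδC : C ≤ LinearMap.ker δ)
    (hεC : C ≤ LinearMap.ker ε) (hδw : δ w = 1) (hεe : ε e = 1) :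
    ∃ h : V ≃ₗ[F] V, (∀ x ∈ C, h x = x) ∧ (∀ x ∈ E, h x ∈ E) ∧ h w = e ∧
      ∀ x, ε (h x) = δ x := by
  obtain ⟨Y, hYw, hYε⟩ := exists_linearEquiv_apply_eq_and_comp_eq (V := E)
    (δ := δ.domRestrict E) (ε := ε.domRestrict E) (w := ⟨w, hw⟩) (e := ⟨e, he⟩) hδw hεe
  set h := LinearEquiv.ofIsCompl hCE (LinearEquiv.refl F C) Y
  have h_left (x : V) (hx : x ∈ C) : h x = x := LinearEquiv.ofIsCompl_apply_left hCE _ Y ⟨x, hx⟩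
  have h_right (x : V) (hx : x ∈ E) : h x = Y ⟨x, hx⟩ :=
    LinearEquiv.ofIsCompl_apply_right hCE _ Y ⟨x, hx⟩
  refine ⟨h, h_left, fun x hx => h_right x hx ▸ (Y _).2, by rw [h_right w hw, hYw], fun x => ?_⟩
  have : ε ∘ₗ h.toLinearMap = δ := by
    refine LinearMap.ext_on_codisjoint hCE.codisjoint (fun x hx => ?_) (fun x hx => ?_)
    · simp [h_left x hx, LinearMap.mem_ker.1 (hεC hx), LinearMap.mem_ker.1 (hδC hx)]
    · simpa [h_right x hx] using hYε ⟨x, hx⟩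
  exact LinearMap.congr_fun this x

lemma finrank_inf_add_finrank_le_of_disjoint [FiniteDimensional F V] (hCE : Disjoint C E)
    {W : Submodule F V} (hCW : C ≤ W) : finrank F ↥(E ⊓ W) + finrank F C ≤ finrank F W := by
  have hdisj : E ⊓ W ⊓ C = ⊥ := (hCE.symm.mono_left inf_le_left).eq_bot
  have := Submodule.finrank_sup_add_finrank_inf_eq (E ⊓ W) C
  rw [hdisj, finrank_bot, add_zero] at this
  rw [← this]
  exact Submodule.finrank_mono (sup_le inf_le_right hCW)

lemma finrank_add_le_finrank_inf_comap [FiniteDimensional F V] (E : Submodule F V)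
    (X : V ≃ₗ[F] V) :
    2 * finrank F E ≤ finrank F V + finrank F ↥(E ⊓ E.comap X.toLinearMap) := by
  have hmap : finrank F (E.comap X.toLinearMap) = finrank F E := by
    rw [Submodule.comap_equiv_eq_map_symm, LinearEquiv.finrank_map_eq]
  have := Submodule.finrank_sup_add_finrank_inf_eq E (E.comap X.toLinearMap)
  have := Submodule.finrank_le (E ⊔ E.comap X.toLinearMap)
  omega

theorem exists_mem_and_dual_of_isCompl [FiniteDimensional F V] (hCE : IsCompl C E)
    (hdim : 3 * finrank F C < finrank F V) (X : V ≃ₗ[F] V) :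
    ∃ c ∈ E, X c ∈ E ∧ ∃ δ : Dual F V, C ≤ LinearMap.ker δ ∧
      C ≤ LinearMap.ker (δ ∘ₗ X.toLinearMap) ∧ δ (X c) = 1 := by
  set K := E ⊓ E.comap X.toLinearMap
  set W := C ⊔ C.map X.toLinearMap
  have hK : ¬ K.map X.toLinearMap ≤ W := by
    intro hle
    have hKE : K.map X.toLinearMap ≤ E ⊓ W := le_inf (by rintro _ ⟨c, hc, rfl⟩; exact hc.2) hle
    have h1 : finrank F K ≤ finrank F ↥(E ⊓ W) := by
      simpa only [LinearEquiv.finrank_map_eq] using Submodule.finrank_mono hKE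
    have h2 : finrank F ↥(E ⊓ W) + finrank F C ≤ finrank F W :=
      finrank_inf_add_finrank_le_of_disjoint hCE.disjoint le_sup_left
    have h3 : finrank F W ≤ 2 * finrank F C := by
      have : finrank F W ≤ finrank F C + finrank F (C.map X.toLinearMap) :=
        Submodule.finrank_add_le_finrank_add_finrank _ _
      rw [LinearEquiv.finrank_map_eq] at this
      omega
    have h4 : 2 * finrank F E ≤ finrank F V + finrank F K := finrank_add_le_finrank_inf_comap E X
    have h5 := Submodule.finrank_add_eq_of_isCompl hCE
    omega
  obtain ⟨_, ⟨c, hc, rfl⟩, hcW⟩ := SetLike.not_le_iff_exists.1 hK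
  obtain ⟨f, hfc, hWf⟩ := Submodule.exists_le_ker_of_notMem hcW
  refine ⟨c, hc.1, hc.2, (f (X c))⁻¹ • f, fun x hx => ?_, fun x hx => ?_, inv_mul_cancel₀ hfc⟩
  · simp [LinearMap.mem_ker.1 (hWf (Submodule.mem_sup_left hx))]
  · have hXx : X x ∈ W := Submodule.mem_sup_right (Submodule.mem_map_of_mem hx)
    simp [LinearMap.mem_ker.1 (hWf hXx)]

theorem exists_fixing_mul_mul_fixing [FiniteDimensional F V] (hCE : IsCompl C E)
    (hdim : 3 * finrank F C < finrank F V) (X : V ≃ₗ[F] V) {e : V} (he : e ∈ E)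
    {ε : Dual F V} (hεC : C ≤ LinearMap.ker ε) (hεe : ε e = 1) :
    ∃ h h' : V ≃ₗ[F] V, ((∀ x ∈ C, h x = x) ∧ ∀ x ∈ E, h x ∈ E) ∧
      ((∀ x ∈ C, h' x = x) ∧ ∀ x ∈ E, h' x ∈ E) ∧
      (h⁻¹ * X * h'⁻¹) e = e ∧ ∀ x, ε ((h⁻¹ * X * h'⁻¹) x) = ε x := by
  obtain ⟨c, hcE, hXcE, δ, hδC, hδXC, hδXc⟩ := exists_mem_and_dual_of_isCompl hCE hdim X
  obtain ⟨h, hC, hE, hhe, hδh⟩ :=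
    exists_linearEquiv_fixing_of_isCompl hCE he hXcE hεC hδC hεe hδXc
  obtain ⟨h', hC', hE', hh'c, hεh'⟩ :=
    exists_linearEquiv_fixing_of_isCompl hCE hcE he hδXC hεC hδXc hεe
  refine ⟨h, h', ⟨hC, hE⟩, ⟨hC', hE'⟩, ?_, fun x => ?_⟩
  · have hc : h'⁻¹ e = c := by simp [← hh'c]
    have hXc : h⁻¹ (X c) = e := by simp [← hhe]
    simp [hc, hXc]
  · rw [← hδh]
    simpa using (hεh' (h'⁻¹ x)).symm

end Abstract

section PiSubmodule

variable {ι R M : Type*} [Semiring R] [AddCommMonoid M] [Module R M]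

theorem Submodule.isCompl_pi_compl_bot_pi_bot (s : Set ι) :
    IsCompl (Submodule.pi sᶜ fun _ => (⊥ : Submodule R M)) (Submodule.pi s fun _ => ⊥) := by
  classical
  constructor
  · rw [Submodule.disjoint_def]
    intro x hC hE
    funext r
    by_cases hr : r ∈ s
    · exact hE r hr
    · exact hC r hr
  · rw [codisjoint_iff, Submodule.eq_top_iff']
    intro x
    refine Submodule.mem_sup.2 ⟨fun r => if r ∈ s then x r else 0, fun r hr => ?_,
      fun r => if r ∈ s then 0 else x r, fun r hr => ?_, ?_⟩
    · simp [Set.notMem_of_mem_compl hr]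
    · simp [hr]
    · funext r
      by_cases hr : r ∈ s <;> simp [hr]

end PiSubmodule

theorem finrank_pi_compl_bot_le {ι F : Type*} [Fintype ι] [Field F] (s : Set ι) [Fintype s] :
    finrank F (Submodule.pi sᶜ fun _ => (⊥ : Submodule F F)) ≤ Fintype.card s := by
  rw [← finrank_fintype_fun_eq_card F]
  refine LinearMap.finrank_le_finrank_of_injective
    (f := LinearMap.funLeft F F ((↑) : s → ι) ∘ₗ Submodule.subtype _) fun x y hxy => ?_
  ext r
  by_cases hr : r ∈ s
  · exact congrFun hxy ⟨r, hr⟩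
  · rw [x.2 r hr, y.2 r hr]

section ExtMat

variable {F : Type} [Field F] {j : ℕ}

@[simp]
lemma extMat_castSucc_castSucc (M : Matrix (Fin j) (Fin j) F) (r s : Fin j) :
    extMat M r.castSucc s.castSucc = M r s := by
  simp [extMat]

@[simp]
lemma extMat_castSucc_last (M : Matrix (Fin j) (Fin j) F) (r : Fin j) :
    extMat M r.castSucc (Fin.last j) = 0 := by
  simp [extMat]

@[simp]
lemma extMat_last_castSucc (M : Matrix (Fin j) (Fin j) F) (s : Fin j) :
    extMat M (Fin.last j) s.castSucc = 0 := by
  simp [extMat]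

@[simp]
lemma extMat_last_last (M : Matrix (Fin j) (Fin j) F) : extMat M (Fin.last j) (Fin.last j) = 1 := by
  simp [extMat]

lemma extMat_mul (A B : Matrix (Fin j) (Fin j) F) : extMat (A * B) = extMat A * extMat B := by
  ext r s
  induction r using Fin.lastCases <;> induction s using Fin.lastCases <;>
    simp [Matrix.mul_apply, Fin.sum_univ_castSucc]

lemma extMat_one : extMat (1 : Matrix (Fin j) (Fin j) F) = 1 := by
  ext r s
  induction r using Fin.lastCases <;> induction s using Fin.lastCases <;>
    simp [Matrix.one_apply, Fin.castSucc_ne_last, (Fin.castSucc_ne_last _).symm]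

lemma extMat_injective : Function.Injective (extMat : Matrix (Fin j) (Fin j) F → _) := by
  intro A B h
  ext r s
  simpa using congrFun₂ h r.castSucc s.castSucc

lemma extMat_submatrix_castSucc {M : Matrix (Fin (j + 1)) (Fin (j + 1)) F}
    (hcol : M *ᵥ Pi.single (Fin.last j) 1 = Pi.single (Fin.last j) 1)
    (hrow : ∀ x, (M *ᵥ x) (Fin.last j) = x (Fin.last j)) :
    extMat (M.submatrix Fin.castSucc Fin.castSucc) = M := by
  have hrow' (s : Fin (j + 1)) :
      M (Fin.last j) s = (Pi.single s 1 : Fin (j + 1) → F) (Fin.last j) := by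
    simpa using hrow (Pi.single s 1)
  rw [mulVec_single_one] at hcol
  ext r s
  induction r using Fin.lastCases with
  | last =>
    induction s using Fin.lastCases with
    | last => simp [hrow']
    | cast s => simp [hrow', Fin.castSucc_ne_last]
  | cast r =>
    induction s using Fin.lastCases with
    | last => simpa [Fin.castSucc_ne_last] using (congrFun hcol r.castSucc).symm
    | cast s => simp

theorem exists_extMat_eq (M : GL (Fin (j + 1)) F)
    (hcol : (M : Matrix _ _ F) *ᵥ Pi.single (Fin.last j) 1 = Pi.single (Fin.last j) 1)
    (hrow : ∀ x, ((M : Matrix _ _ F) *ᵥ x) (Fin.last j) = x (Fin.last j)) :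
    ∃ g : GL (Fin j) F, extMat (g : Matrix (Fin j) (Fin j) F) = M := by
  set A := M.val
  set B := M⁻¹.val
  have hAB : A * B = 1 := M.mul_inv
  have hBA : B * A = 1 := M.inv_mul
  have hcolB : B *ᵥ Pi.single (Fin.last j) 1 = Pi.single (Fin.last j) 1 := by
    conv_lhs => rw [← hcol, mulVec_mulVec, hBA, one_mulVec]
  have hrowB (x : Fin (j + 1) → F) : (B *ᵥ x) (Fin.last j) = x (Fin.last j) := by
    simpa [mulVec_mulVec, hAB] using (hrow (B *ᵥ x)).symm
  have hA := extMat_submatrix_castSucc hcol hrow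
  have hB := extMat_submatrix_castSucc hcolB hrowB
  exact ⟨⟨A.submatrix Fin.castSucc Fin.castSucc, B.submatrix Fin.castSucc Fin.castSucc,
    extMat_injective (by rw [extMat_mul, hA, hB, hAB, extMat_one]),
    extMat_injective (by rw [extMat_mul, hA, hB, hBA, extMat_one])⟩, hA⟩

end ExtMat

def headSubspace (F : Type) [Field F] (i n : ℕ) : Submodule F (Fin n → F) :=
  Submodule.pi {r | (r : ℕ) < i}ᶜ fun _ => ⊥

def tailSubspace (F : Type) [Field F] (i n : ℕ) : Submodule F (Fin n → F) :=
  Submodule.pi {r | (r : ℕ) < i} fun _ => ⊥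

section Coordinates

variable {F : Type} [Field F]

lemma isCompl_headSubspace_tailSubspace (i n : ℕ) :
    IsCompl (headSubspace F i n) (tailSubspace F i n) :=
  Submodule.isCompl_pi_compl_bot_pi_bot _

lemma finrank_headSubspace_le (i n : ℕ) : finrank F (headSubspace F i n) ≤ i := by
  refine (finrank_pi_compl_bot_le _).trans ?_
  simpa using Fintype.card_le_of_injective
    (fun r : {r : Fin n | (r : ℕ) < i} => (⟨r, r.2⟩ : Fin i))
    fun _ _ h => Subtype.ext (Fin.ext (Fin.mk.inj h))

def Matrix.GeneralLinearGroup.toLinearEquiv (n : ℕ) :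
    GL (Fin n) F ≃* ((Fin n → F) ≃ₗ[F] (Fin n → F)) :=
  toLin.trans (LinearMap.GeneralLinearGroup.generalLinearEquiv F _)

@[simp]
lemma Matrix.GeneralLinearGroup.toLinearEquiv_apply {n : ℕ} (g : GL (Fin n) F) (x : Fin n → F) :
    toLinearEquiv n g x = (g : Matrix (Fin n) (Fin n) F) *ᵥ x := by
  simp [toLinearEquiv, toLin, LinearMap.GeneralLinearGroup.generalLinearEquiv]

@[simp]
lemma Matrix.GeneralLinearGroup.mulVec_toLinearEquiv_symm {n : ℕ}
    (k : (Fin n → F) ≃ₗ[F] (Fin n → F)) (x : Fin n → F) :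
    ((toLinearEquiv n).symm k : Matrix (Fin n) (Fin n) F) *ᵥ x = k x := by
  rw [← toLinearEquiv_apply, MulEquiv.apply_symm_apply]

lemma inHblock_toLinearEquiv_symm {i n : ℕ} (k : (Fin n → F) ≃ₗ[F] (Fin n → F))
    (hC : ∀ x ∈ headSubspace F i n, k x = x)
    (hE : ∀ x ∈ tailSubspace F i n, k x ∈ tailSubspace F i n) :
    inHblock i ((GeneralLinearGroup.toLinearEquiv n).symm k) := by
  intro r s hrs
  have hentry : ((GeneralLinearGroup.toLinearEquiv n).symm k : Matrix (Fin n) (Fin n) F) r s =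
      k (Pi.single s 1) r := by
    simp [← GeneralLinearGroup.mulVec_toLinearEquiv_symm]
  by_cases hs : (s : ℕ) < i
  · have hsC : Pi.single s 1 ∈ headSubspace F i n := fun r hr => by
      simp [show r ≠ s by rintro rfl; exact hr hs]
    rw [hentry, hC _ hsC, Pi.single_apply]
  · have hr := hrs.resolve_right hs
    have hsE : Pi.single s 1 ∈ tailSubspace F i n := fun r hr => by
      simp [show r ≠ s by rintro rfl; exact hs hr]
    rw [hentry, if_neg (by rintro rfl; exact hs hr)]
    exact hE _ hsE r hr

end Coordinates

theorem stmt_18_general (F : Type) [Field F] (i j : ℕ) (h3i : 3 * i ≤ j)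
    (X : GL (Fin (j + 1)) F) :
    ∃ h h' : GL (Fin (j + 1)) F, inHblock i h ∧ inHblock i h' ∧
      ∃ g : GL (Fin j) F,
        (X : Matrix (Fin (j + 1)) (Fin (j + 1)) F)
          = (h : Matrix (Fin (j + 1)) (Fin (j + 1)) F)
            * extMat (g : Matrix (Fin j) (Fin j) F)
            * (h' : Matrix (Fin (j + 1)) (Fin (j + 1)) F) := by
  have hlast : ¬ ((Fin.last j : ℕ) < i) := by rw [Fin.val_last]; omega
  have hdim : 3 * finrank F (headSubspace F i (j + 1)) < finrank F (Fin (j + 1) → F) := by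
    have := finrank_headSubspace_le (F := F) i (j + 1)
    rw [finrank_fin_fun]
    omega
  set toEquiv := GeneralLinearGroup.toLinearEquiv (F := F) (j + 1)
  obtain ⟨h, h', ⟨hC, hE⟩, ⟨hC', hE'⟩, hcol, hrow⟩ :=
    exists_fixing_mul_mul_fixing (isCompl_headSubspace_tailSubspace i (j + 1)) hdim (toEquiv X)
      (e := Pi.single (Fin.last j) 1) (ε := LinearMap.proj (Fin.last j))
      (fun r hr => by simp [(show r ≠ Fin.last j by rintro rfl; exact hlast hr)])
      (fun x hx => hx _ hlast) (by simp)
  obtain ⟨g, hg⟩ := exists_extMat_eq (toEquiv.symm (h⁻¹ * toEquiv X * h'⁻¹))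
    (by rw [GeneralLinearGroup.mulVec_toLinearEquiv_symm]; exact hcol)
    (fun x => by rw [GeneralLinearGroup.mulVec_toLinearEquiv_symm]; exact hrow x)
  refine ⟨toEquiv.symm h, toEquiv.symm h', inHblock_toLinearEquiv_symm h hC hE,
    inHblock_toLinearEquiv_symm h' hC' hE', g, ?_⟩
  rw [hg, ← Units.val_mul, ← Units.val_mul, ← map_mul, ← map_mul]
  simp [mul_assoc]

/-- for `j ≥ 3i`, the natural map
`H_{i,j}\GL_j(F_q)/H_{i,j} → H_{i,j+1}\GL_{j+1}(F_q)/H_{i,j+1}` induced by the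
standard inclusion is surjective: every `X ∈ GL_{j+1}(F_q)` equals
`h ⬝ ι(g) ⬝ h'` for some `h, h' ∈ H_{i,j+1}` and `g ∈ GL_j(F_q)`. -/
theorem stmt_18 (F : Type) [Field F] [Fintype F] (i j : ℕ) (h3i : 3 * i ≤ j)
    (X : GL (Fin (j + 1)) F) :
    ∃ h h' : GL (Fin (j + 1)) F, inHblock i h ∧ inHblock i h' ∧
      ∃ g : GL (Fin j) F,
        (X : Matrix (Fin (j + 1)) (Fin (j + 1)) F)
          = (h : Matrix (Fin (j + 1)) (Fin (j + 1)) F)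
            * extMat (g : Matrix (Fin j) (Fin j) F)
            * (h' : Matrix (Fin (j + 1)) (Fin (j + 1)) F) :=
  stmt_18_general F i j h3i X
end
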